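/- Let α and β be types and φ : α → β a function. Let js = [j₁, …, j_k] be a list over β and B = [B₁, …, B_k] a list of lists over α of the same length k such that for every index q: every element a of B_q satisfies φ(a) = j_q, and conversely every a ∈ α with φ(a) = j_q occurs in B_q. Let l = [i₁, …, i_ℓ] be a list over α such that φ(i_p) ≠ φ(i_{p+1}) for all consecutive pairs. Then l is a sublist (subsequence) of the concatenation B₁ ++ ⋯ ++ B_k if and only if the list [φ(i₁), …, φ(i_ℓ)] is a sublist of js. -/

import Mathlib

namespace List

variable {α β : Type*} {φ : α → β} {B : List (List α)} {js : List β}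

theorem sublist_flatten_of_map_sublist
    (hB : Forall₂ (fun Bq j => ∀ a, φ a = j → a ∈ Bq) B js) {l : List α}
    (h : (l.map φ).Sublist js) : l.Sublist B.flatten := by
  induction hB generalizing l with
  | nil => simp_all
  | @cons Bq j B js hj _ ih =>
    cases l with
    | nil => exact nil_sublist _
    | cons a l =>
      rcases sublist_cons_iff.1 h with h | ⟨r, hr, h⟩
      · exact (ih h).trans (sublist_append_right _ _)
      · obtain ⟨rfl, rfl⟩ := cons.inj hr
        exact (singleton_sublist.2 (hj a rfl)).append (ih h)

/- The part of `l` drawn from one block is a contiguous piece of `l` whose letters share their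
image, so by the chain condition it has at most one letter. -/
theorem map_sublist_of_sublist_flatten
    (hB : Forall₂ (fun Bq j => ∀ a ∈ Bq, φ a = j) B js) {l : List α}
    (hl : l.IsChain fun x y => φ x ≠ φ y) (h : l.Sublist B.flatten) :
    (l.map φ).Sublist js := by
  induction hB generalizing l with
  | nil => simp_all
  | @cons Bq j B js hj _ ih =>
    obtain ⟨l₁, l₂, rfl, h₁, h₂⟩ := sublist_append_iff.1 h
    match l₁, hl with
    | [], hl => exact (ih hl h₂).cons j
    | [a], hl =>
      rw [← hj a (h₁.subset (mem_singleton_self a))]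
      exact (ih hl.tail h₂).cons_cons (φ a)
    | a :: b :: _, hl =>
      have ha : φ a = j := hj a (h₁.subset (by simp))
      have hb : φ b = j := hj b (h₁.subset (by simp))
      exact absurd (ha.trans hb.symm) (isChain_cons_cons.1 hl).1

end List

theorem stmt_7 {α β : Type*} (φ : α → β) (js : List β) (B : List (List α))
    (hlen : B.length = js.length)
    (hmem : ∀ (q : ℕ) (hq : q < B.length) (a : α),
      a ∈ B[q] ↔ φ a = js[q]'(hlen ▸ hq))
    (l : List α) (hchain : l.Chain' fun x y => φ x ≠ φ y) :
    l.Sublist B.flatten ↔ (l.map φ).Sublist js := by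
  have hB : List.Forall₂ (fun Bq j => ∀ a, a ∈ Bq ↔ φ a = j) B js :=
    List.forall₂_iff_get.2 ⟨hlen, fun q hq _ => hmem q hq⟩
  exact ⟨List.map_sublist_of_sublist_flatten (hB.imp fun _ _ h a => (h a).1) hchain,
    List.sublist_flatten_of_map_sublist (hB.imp fun _ _ h a => (h a).2)⟩
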